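/- Let d ≥ 1, let 0 < μ ≤ G_d, let D̂ be a real d×d diagonal matrix with diagonal entries in [μ, G_d], let α be real with 0 < α ≤ μ/(2·G_d²), set ρ = 1 − α·μ, and for an integer k ≥ 0 define Γ = (I − (I − α·D̂)^{k+1})·D̂^{−1}. Then for every vector v ∈ ℝ^d, ⟨v, Γ·v⟩ ≥ ((1 − ρ^{k+1})/G_d)·‖v‖², and in particular ⟨v, Γ·v⟩ ≥ 0 with the right-hand constant (1 − ρ^{k+1})/G_d strictly positive. -/

import Mathlib

open scoped RealInnerProductSpace

noncomputable def mulV {d : ℕ} (A : Matrix (Fin d) (Fin d) ℝ)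
    (v : EuclideanSpace ℝ (Fin d)) : EuclideanSpace ℝ (Fin d) :=
  Matrix.toEuclideanCLM (𝕜 := ℝ) A v

/-!
Since `D̂ = diag(t₁, …, t_d)` is diagonal, so is `Γ`, with entries `(1 - (1 - α tᵢ)^{k+1}) / tᵢ`.
The step-size bound gives `α tᵢ ≤ α G_d ≤ 1/2`, so `0 ≤ 1 - α tᵢ ≤ 1 - α μ = ρ`; hence every
numerator is at least `1 - ρ^{k+1} > 0` and every denominator at most `G_d`.
-/

open Matrix

lemma mul_le_half_of_le_div_two_mul_sq {μ G α : ℝ} (hμ : 0 < μ) (hμG : μ ≤ G)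
    (hα : α ≤ μ / (2 * G ^ 2)) : α * G ≤ 1 / 2 := by
  have hG : 0 < G := hμ.trans_le hμG
  calc α * G ≤ μ / (2 * G ^ 2) * G := by gcongr
    _ = μ / (2 * G) := by field_simp
    _ ≤ G / (2 * G) := by gcongr
    _ = 1 / 2 := by field_simp

lemma one_sub_one_sub_mul_pow_div_le {μ t G α : ℝ} (hμ : 0 < μ) (hμt : μ ≤ t) (htG : t ≤ G)
    (hα : 0 ≤ α) (hαt : α * t ≤ 1) (n : ℕ) :
    (1 - (1 - α * μ) ^ n) / G ≤ (1 - (1 - α * t) ^ n) / t := by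
  have hρt : 0 ≤ 1 - α * t := by linarith
  have hρμ : 1 - α * t ≤ 1 - α * μ := by nlinarith
  have hnum : 0 ≤ 1 - (1 - α * t) ^ n := sub_nonneg.2 (pow_le_one₀ hρt (by nlinarith))
  exact div_le_div₀ hnum (by gcongr) (hμ.trans_le hμt) htG

lemma one_sub_one_sub_smul_diagonal_pow_mul_inv {n : Type*} [Fintype n] [DecidableEq n]
    {t : n → ℝ} (ht : ∀ i, t i ≠ 0) (α : ℝ) (m : ℕ) :
    (1 - (1 - α • diagonal t) ^ m) * (diagonal t)⁻¹ =
      diagonal fun i => (1 - (1 - α * t i) ^ m) / t i := by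
  have hinv : (diagonal t)⁻¹ = diagonal fun i => (t i)⁻¹ :=
    inv_eq_right_inv <| by rw [diagonal_mul_diagonal, ← diagonal_one]; simp [ht]
  rw [hinv, ← diagonal_smul, ← diagonal_one, diagonal_sub, diagonal_pow, diagonal_sub,
    diagonal_mul_diagonal]
  rfl

lemma inner_mulV_diagonal {d : ℕ} (γ : Fin d → ℝ) (v : EuclideanSpace ℝ (Fin d)) :
    ⟪v, mulV (diagonal γ) v⟫ = ∑ i, γ i * v i ^ 2 := by
  simp only [mulV, inner_toEuclideanCLM, dotProduct, mulVec_diagonal]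
  exact Finset.sum_congr rfl fun i _ => by ring

lemma mul_norm_sq_le_inner_mulV_diagonal {d : ℕ} {γ : Fin d → ℝ} {c : ℝ} (hγ : ∀ i, c ≤ γ i)
    (v : EuclideanSpace ℝ (Fin d)) : c * ‖v‖ ^ 2 ≤ ⟪v, mulV (diagonal γ) v⟫ := by
  rw [inner_mulV_diagonal, EuclideanSpace.real_norm_sq_eq, Finset.mul_sum]
  gcongr with i
  exact hγ i

theorem stmt3_general (d : ℕ) (μ Gd : ℝ) (hμ : 0 < μ) (hμG : μ ≤ Gd)
    (Dh : Matrix (Fin d) (Fin d) ℝ) (hDdiag : Dh.IsDiag)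
    (hDbound : ∀ i, Dh i i ∈ Set.Icc μ Gd)
    (α : ℝ) (hα : 0 < α) (hα2 : α ≤ μ / (2 * Gd ^ 2))
    (ρ : ℝ) (hρ : ρ = 1 - α * μ)
    (k : ℕ) (Γ : Matrix (Fin d) (Fin d) ℝ)
    (hΓ : Γ = (1 - (1 - α • Dh) ^ (k + 1)) * Dh⁻¹) :
    0 < (1 - ρ ^ (k + 1)) / Gd ∧
    ∀ v : EuclideanSpace ℝ (Fin d),
      ((1 - ρ ^ (k + 1)) / Gd) * ‖v‖ ^ 2 ≤ ⟪v, mulV Γ v⟫ ∧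
      0 ≤ ⟪v, mulV Γ v⟫ := by
  have hGd : 0 < Gd := hμ.trans_le hμG
  have hαG : α * Gd ≤ 1 / 2 := mul_le_half_of_le_div_two_mul_sq hμ hμG hα2
  have hαμ : α * μ ≤ 1 / 2 := by nlinarith
  have hc : 0 < (1 - ρ ^ (k + 1)) / Gd := by
    refine div_pos (sub_pos.2 (pow_lt_one₀ ?_ ?_ k.succ_ne_zero)) hGd <;>
      nlinarith
  have hΓdiag : Γ = diagonal fun i => (1 - (1 - α * Dh.diag i) ^ (k + 1)) / Dh.diag i := by
    rw [hΓ]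
    conv_lhs => rw [← hDdiag.diagonal_diag]
    exact one_sub_one_sub_smul_diagonal_pow_mul_inv
      (fun i => (hμ.trans_le (hDbound i).1).ne') α (k + 1)
  have hbound (v : EuclideanSpace ℝ (Fin d)) :
      ((1 - ρ ^ (k + 1)) / Gd) * ‖v‖ ^ 2 ≤ ⟪v, mulV Γ v⟫ := by
    rw [hΓdiag, hρ]
    refine mul_norm_sq_le_inner_mulV_diagonal (fun i => ?_) v
    obtain ⟨hμi, hiG⟩ := hDbound i
    exact one_sub_one_sub_mul_pow_div_le hμ hμi hiG hα.le (by nlinarith) (k + 1)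
  exact ⟨hc, fun v => ⟨hbound v, (by positivity : 0 ≤ _ * ‖v‖ ^ 2).trans (hbound v)⟩⟩

/-- **Lemma 4.** The preconditioner `Γ = (I - (I - α·D̂)^{k+1})·D̂⁻¹`
satisfies `⟨v, Γ·v⟩ ≥ ((1 - ρ^{k+1})/G_d)·‖v‖²` for every `v`, with
`(1 - ρ^{k+1})/G_d > 0`, where `ρ = 1 - α·μ`. -/
theorem stmt3 (d : ℕ) (hd : 1 ≤ d) (μ Gd : ℝ) (hμ : 0 < μ) (hμG : μ ≤ Gd)
    (Dh : Matrix (Fin d) (Fin d) ℝ) (hDdiag : Dh.IsDiag)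
    (hDbound : ∀ i, Dh i i ∈ Set.Icc μ Gd)
    (α : ℝ) (hα : 0 < α) (hα2 : α ≤ μ / (2 * Gd ^ 2))
    (ρ : ℝ) (hρ : ρ = 1 - α * μ)
    (k : ℕ) (Γ : Matrix (Fin d) (Fin d) ℝ)
    (hΓ : Γ = (1 - (1 - α • Dh) ^ (k + 1)) * Dh⁻¹) :
    0 < (1 - ρ ^ (k + 1)) / Gd ∧
    ∀ v : EuclideanSpace ℝ (Fin d),
      ((1 - ρ ^ (k + 1)) / Gd) * ‖v‖ ^ 2 ≤ ⟪v, mulV Γ v⟫ ∧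
      0 ≤ ⟪v, mulV Γ v⟫ :=
  stmt3_general d μ Gd hμ hμG Dh hDdiag hDbound α hα hα2 ρ hρ k Γ hΓ
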